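/- arXiv:1212.6157 — 6 statements merged into one kernel-verified Lean document; each statement's English description precedes it below -/
import Mathlib

section
/- Let R be a local principal ideal ring of length two with residue field k and reduction map r, let n be a positive integer and A ∈ M_n(k). Let G_A denote the centralizer of A in GL_n(k) and let H = r⁻¹(G_A) ⊆ GL_n(R). Then H acts by conjugation on the fibre r⁻¹(A) ⊆ M_n(R), and the map sending a similarity class 𝒞 of M_n(R) to 𝒞 ∩ r⁻¹(A) is a bijection from the set of similarity classes of M_n(R) whose image under r is contained in the similarity class of A onto the set of H-orbits in r⁻¹(A). -/
/-!
Conjugation commutes with reduction, and every element of `GLₙ(k)` lifts to `GLₙ(R)` because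
a matrix over a local ring is invertible as soon as its reduction is. Hence a similarity class
of `Mₙ(R)` reducing into the class of `A` meets the fibre `r⁻¹(A)`, it is the class of any of
its points there, and two points of the fibre are conjugate by `g` exactly when `r(g)`
centralizes `A`.
-/

open Matrix IsLocalRing

namespace Matrix

variable {ι R S : Type*} [Fintype ι] [DecidableEq ι] [CommRing R] [CommRing S]

def similarityClass (M : Matrix ι ι R) : Set (Matrix ι ι R) :=
  {B | ∃ g : GL ι R, B = (g : Matrix ι ι R) * M * (g⁻¹ : GL ι R)}

lemma mem_similarityClass_self (M : Matrix ι ι R) : M ∈ similarityClass M :=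
  ⟨1, by simp⟩

lemma similarityClass_eq_of_mem {M N : Matrix ι ι R} (h : N ∈ similarityClass M) :
    similarityClass N = similarityClass M := by
  obtain ⟨g, rfl⟩ := h
  ext B
  constructor
  · rintro ⟨u, rfl⟩
    exact ⟨u * g, by simp [mul_assoc]⟩
  · rintro ⟨u, rfl⟩
    exact ⟨u * g⁻¹, by simp [mul_assoc]⟩

lemma mem_similarityClass_comm {M N : Matrix ι ι R} :
    N ∈ similarityClass M ↔ M ∈ similarityClass N := by
  constructor <;> intro h <;> rw [similarityClass_eq_of_mem h] <;> exact mem_similarityClass_self _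

lemma map_conj (f : R →+* S) (g : GL ι R) (M : Matrix ι ι R) :
    ((g : Matrix ι ι R) * M * (g⁻¹ : GL ι R)).map f =
      (GeneralLinearGroup.map f g : Matrix ι ι S) * M.map f *
        ((GeneralLinearGroup.map f g)⁻¹ : GL ι S) := by
  rw [← GeneralLinearGroup.map_inv]
  simp only [Matrix.map_mul]
  rfl

lemma map_mem_similarityClass_map (f : R →+* S) {M N : Matrix ι ι R}
    (h : N ∈ similarityClass M) : N.map f ∈ similarityClass (M.map f) := by
  obtain ⟨g, rfl⟩ := h
  exact ⟨GeneralLinearGroup.map f g, map_conj f g M⟩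

lemma GeneralLinearGroup.map_surjective (f : R →+* S) [IsLocalHom f]
    (hf : Function.Surjective f) :
    Function.Surjective (GeneralLinearGroup.map (n := ι) f) := by
  intro h
  choose lift hlift using hf
  let B : Matrix ι ι R := (h : Matrix ι ι S).map lift
  have hB : B.map f = h := by ext; exact hlift _
  have hdet : IsUnit B.det := by
    refine IsUnit.of_map f _ ?_
    rw [RingHom.map_det, RingHom.mapMatrix_apply, hB]
    exact h.isUnit.map Matrix.detMonoidHom
  exact ⟨(B.isUnit_iff_isUnit_det.mpr hdet).unit, Units.ext hB⟩

section Fibre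

variable (f : R →+* S)

lemma similarityClass_inter_fibre {A : Matrix ι ι S} {M : Matrix ι ι R} (hM : M.map f = A) :
    similarityClass M ∩ {B | B.map f = A} =
      {B | ∃ g : GL ι R, (g : Matrix ι ι R).map f * A = A * (g : Matrix ι ι R).map f ∧
        B = (g : Matrix ι ι R) * M * (g⁻¹ : GL ι R)} := by
  ext B
  constructor
  · rintro ⟨⟨g, rfl⟩, hB⟩
    rw [Set.mem_ofPred_eq, map_conj, hM, Units.mul_inv_eq_iff_eq_mul] at hB
    exact ⟨g, hB, rfl⟩
  · rintro ⟨g, hg, rfl⟩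
    refine ⟨⟨g, rfl⟩, ?_⟩
    rw [Set.mem_ofPred_eq, map_conj, hM, Units.mul_inv_eq_iff_eq_mul]
    exact hg

variable {f}

lemma exists_mem_similarityClass_map_eq
    (hf : Function.Surjective (GeneralLinearGroup.map (n := ι) f))
    {A : Matrix ι ι S} {M : Matrix ι ι R} (hM : M.map f ∈ similarityClass A) :
    ∃ N ∈ similarityClass M, N.map f = A := by
  obtain ⟨h, hA⟩ := mem_similarityClass_comm.mp hM
  obtain ⟨g, rfl⟩ := hf h
  exact ⟨_, ⟨g, rfl⟩, (map_conj f g M).trans hA.symm⟩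

lemma exists_eq_similarityClass_and_forall_map_mem_iff
    (hf : Function.Surjective (GeneralLinearGroup.map (n := ι) f))
    (A : Matrix ι ι S) (C : Set (Matrix ι ι R)) :
    ((∃ M, C = similarityClass M) ∧ ∀ B ∈ C, B.map f ∈ similarityClass A) ↔
      ∃ M, M.map f = A ∧ C = similarityClass M := by
  constructor
  · rintro ⟨⟨M, rfl⟩, hC⟩
    obtain ⟨N, hN, hNA⟩ :=
      exists_mem_similarityClass_map_eq hf (hC M (mem_similarityClass_self M))
    exact ⟨N, hNA, (similarityClass_eq_of_mem hN).symm⟩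
  · rintro ⟨M, rfl, rfl⟩
    exact ⟨⟨M, rfl⟩, fun B hB => map_mem_similarityClass_map f hB⟩

theorem bijOn_inter_fibre
    (hf : Function.Surjective (GeneralLinearGroup.map (n := ι) f))
    (A : Matrix ι ι S) :
    Set.BijOn (fun C => C ∩ {B : Matrix ι ι R | B.map f = A})
      {C | (∃ M, C = similarityClass M) ∧ ∀ B ∈ C, B.map f ∈ similarityClass A}
      {O | ∃ M : Matrix ι ι R, M.map f = A ∧
        O = {B | ∃ g : GL ι R,
          (g : Matrix ι ι R).map f * A = A * (g : Matrix ι ι R).map f ∧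
          B = (g : Matrix ι ι R) * M * (g⁻¹ : GL ι R)}} := by
  have hsource := exists_eq_similarityClass_and_forall_map_mem_iff hf A
  refine ⟨?_, ?_, ?_⟩
  · intro C hC
    obtain ⟨M, hM, rfl⟩ := (hsource C).mp hC
    exact ⟨M, hM, similarityClass_inter_fibre f hM⟩
  · intro C hC C' hC' hCC'
    obtain ⟨M, hM, rfl⟩ := (hsource C).mp hC
    obtain ⟨M', -, rfl⟩ := (hsource C').mp hC'
    exact similarityClass_eq_of_mem (hCC'.subset ⟨mem_similarityClass_self M, hM⟩).1
  · rintro O ⟨M, hM, rfl⟩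
    exact ⟨similarityClass M, (hsource _).mpr ⟨M, hM, rfl⟩, similarityClass_inter_fibre f hM⟩

end Fibre

end Matrix

theorem stmt1_general {R : Type*} [CommRing R] [IsLocalRing R]
    (n : ℕ)
    (A : Matrix (Fin n) (Fin n) (ResidueField R)) :
    Set.BijOn
      (fun C => C ∩ {B : Matrix (Fin n) (Fin n) R | B.map (residue R) = A})
      -- similarity classes of `Mₙ(R)` whose image under `r` is contained in the
      -- similarity class of `A`
      {C : Set (Matrix (Fin n) (Fin n) R) |
        (∃ 𝔸, C = {B | ∃ g : GL (Fin n) R,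
            B = (g : Matrix (Fin n) (Fin n) R) * 𝔸 * (g⁻¹ : GL (Fin n) R)}) ∧
        ∀ B ∈ C, ∃ h : GL (Fin n) (ResidueField R),
          B.map (residue R) =
            (h : Matrix (Fin n) (Fin n) (ResidueField R)) * A *
              (h⁻¹ : GL (Fin n) (ResidueField R))}
      -- orbits of `H = r⁻¹(G_A)` in the fibre `r⁻¹(A)`
      {O : Set (Matrix (Fin n) (Fin n) R) |
        ∃ 𝔸, 𝔸.map (residue R) = A ∧
          O = {B | ∃ g : GL (Fin n) R,
            ((g : Matrix (Fin n) (Fin n) R).map (residue R)) * A =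
              A * ((g : Matrix (Fin n) (Fin n) R).map (residue R)) ∧
            B = (g : Matrix (Fin n) (Fin n) R) * 𝔸 * (g⁻¹ : GL (Fin n) R)}} :=
  bijOn_inter_fibre (GeneralLinearGroup.map_surjective _ residue_surjective) A

/-- Let `R` be a local principal ideal ring of length two with residue
field `k` and reduction map `r`, let `n` be a positive integer and `A ∈ Mₙ(k)`.  The map
sending a similarity class `𝒞` of `Mₙ(R)` to `𝒞 ∩ r⁻¹(A)` is a bijection from the set of
similarity classes of `Mₙ(R)` whose image under `r` is contained in the similarity class
of `A` onto the set of orbits of `H = r⁻¹(G_A)` (acting by conjugation) in the fibre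
`r⁻¹(A)`, where `G_A` is the centralizer of `A` in `GLₙ(k)`. -/
theorem stmt1 {R : Type*} [CommRing R] [IsLocalRing R]
    (hprinc : (maximalIdeal R).IsPrincipal) (hne : maximalIdeal R ≠ ⊥)
    (hsq : maximalIdeal R ^ 2 = ⊥) (n : ℕ) (hn : 0 < n)
    (A : Matrix (Fin n) (Fin n) (ResidueField R)) :
    Set.BijOn
      (fun C => C ∩ {B : Matrix (Fin n) (Fin n) R | B.map (residue R) = A})
      -- similarity classes of `Mₙ(R)` whose image under `r` is contained in the
      -- similarity class of `A`
      {C : Set (Matrix (Fin n) (Fin n) R) |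
        (∃ 𝔸, C = {B | ∃ g : GL (Fin n) R,
            B = (g : Matrix (Fin n) (Fin n) R) * 𝔸 * (g⁻¹ : GL (Fin n) R)}) ∧
        ∀ B ∈ C, ∃ h : GL (Fin n) (ResidueField R),
          B.map (residue R) =
            (h : Matrix (Fin n) (Fin n) (ResidueField R)) * A *
              (h⁻¹ : GL (Fin n) (ResidueField R))}
      -- orbits of `H = r⁻¹(G_A)` in the fibre `r⁻¹(A)`
      {O : Set (Matrix (Fin n) (Fin n) R) |
        ∃ 𝔸, 𝔸.map (residue R) = A ∧
          O = {B | ∃ g : GL (Fin n) R,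
            ((g : Matrix (Fin n) (Fin n) R).map (residue R)) * A =
              A * ((g : Matrix (Fin n) (Fin n) R).map (residue R)) ∧
            B = (g : Matrix (Fin n) (Fin n) R) * 𝔸 * (g⁻¹ : GL (Fin n) R)}} :=
  stmt1_general n A
end

section
/- Let R be a local principal ideal ring of length two. Then every matrix A ∈ M_2(R) is similar to its transpose, i.e., there exists g ∈ GL_2(R) with g A g⁻¹ = Aᵀ. -/
/-!
A symmetric invertible `M` with `M A = Aᵀ M` conjugates `A` to its transpose; for
`M = !![x, y; y, z]` and `A = !![a, b; c, d]` this intertwining is the single linear equation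
`x b + y (d - a) = z c`. Over a ring in which divisibility is total (a chain ring) it always has a
solution with `x z - y²` a unit: if `b ∣ d - a` or `c ∣ d - a` take `y = 1`; otherwise `b` and `c`
are non-unit multiples `β (d - a)`, `γ (d - a)`, and `x = z = 1`, `y = γ - β` works because
`1 - y²` is a unit in a local ring. A local ring with principal maximal ideal `(π)` and `𝔪² = 0`
is such a ring: every element is a unit, a unit multiple of `π`, or `0`.
-/

open Matrix IsLocalRing

theorem Matrix.exists_GL_mul_mul_inv_eq_of_mul_eq {n R : Type*} [Fintype n] [DecidableEq n]
    [CommRing R] {A B M : Matrix n n R} (hM : IsUnit M.det) (h : M * A = B * M) :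
    ∃ g : GL n R, (g : Matrix n n R) * A * (g⁻¹ : GL n R) = B := by
  obtain ⟨u, rfl⟩ := (isUnit_iff_isUnit_det M).mpr hM
  exact ⟨u, by rw [h, Units.mul_inv_cancel_right]⟩

theorem Matrix.fin_two_symm_mul_eq_transpose_mul {R : Type*} [CommRing R]
    (A : Matrix (Fin 2) (Fin 2) R) {x y z : R}
    (h : x * A 0 1 + y * (A 1 1 - A 0 0) = z * A 1 0) :
    !![x, y; y, z] * A = Aᵀ * !![x, y; y, z] := by
  ext i j
  fin_cases i <;> fin_cases j <;> simp [mul_apply, Fin.sum_univ_two]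
  · ring
  · linear_combination h
  · linear_combination -h
  · ring

theorem Matrix.exists_GL_conj_eq_transpose_fin_two_of_preValuationRing {R : Type*} [CommRing R]
    [Nontrivial R] [PreValuationRing R] (A : Matrix (Fin 2) (Fin 2) R) :
    ∃ g : GL (Fin 2) R, (g : Matrix (Fin 2) (Fin 2) R) * A * (g⁻¹ : GL (Fin 2) R) = Aᵀ := by
  have conj {x y z : R} (hdet : IsUnit (x * z - y * y))
      (h : x * A 0 1 + y * (A 1 1 - A 0 0) = z * A 1 0) :=
    exists_GL_mul_mul_inv_eq_of_mul_eq (by rwa [det_fin_two_of])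
      (fin_two_symm_mul_eq_transpose_mul A h)
  by_cases hb : A 0 1 ∣ A 1 1 - A 0 0
  · obtain ⟨x, hx⟩ := hb
    exact conj (x := -x) (y := 1) (z := 0) (by simp) (by linear_combination hx)
  by_cases hc : A 1 0 ∣ A 1 1 - A 0 0
  · obtain ⟨z, hz⟩ := hc
    exact conj (x := 0) (y := 1) (z := z) (by simp) (by linear_combination hz)
  obtain ⟨β, hβ⟩ := (ValuationRing.dvd_total _ _).resolve_left hb
  obtain ⟨γ, hγ⟩ := (ValuationRing.dvd_total _ _).resolve_left hc
  have hβm : β ∈ maximalIdeal R := fun hu ↦ hb (Associated.symm ⟨hu.unit, hβ.symm⟩).dvd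
  have hγm : γ ∈ maximalIdeal R := fun hu ↦ hc (Associated.symm ⟨hu.unit, hγ.symm⟩).dvd
  have hym : (γ - β) * (γ - β) ∈ maximalIdeal R :=
    Ideal.mul_mem_left _ _ (Ideal.sub_mem _ hγm hβm)
  exact conj (x := 1) (y := γ - β) (z := 1)
    (by simpa using isUnit_one_sub_self_of_mem_nonunits _ hym)
    (by linear_combination hβ - hγ)

theorem IsLocalRing.preValuationRing_of_maximalIdeal_sq_eq_bot {R : Type*} [CommRing R]
    [IsLocalRing R] (hprinc : (maximalIdeal R).IsPrincipal) (hsq : maximalIdeal R ^ 2 = ⊥) :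
    PreValuationRing R := by
  obtain ⟨π, hπ⟩ := hprinc
  have mem_iff (r : R) : r ∈ maximalIdeal R ↔ π ∣ r := by
    rw [hπ]; exact Ideal.mem_span_singleton
  refine PreValuationRing.iff_dvd_total.mpr ⟨fun a b ↦ ?_⟩
  by_cases ha : IsUnit a
  · exact .inl ha.dvd
  by_cases hb : IsUnit b
  · exact .inr hb.dvd
  obtain ⟨α, rfl⟩ := (mem_iff a).mp ha
  obtain ⟨β, rfl⟩ := (mem_iff b).mp hb
  by_cases hα : IsUnit α
  · exact .inl (mul_dvd_mul_left π hα.dvd)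
  have hπα : π * α ∈ maximalIdeal R ^ 2 :=
    pow_two (maximalIdeal R) ▸ Ideal.mul_mem_mul ((mem_iff π).mpr dvd_rfl) hα
  rw [hsq, Ideal.mem_bot] at hπα
  exact .inr (hπα ▸ dvd_zero _)

theorem stmt4_general {R : Type*} [CommRing R] [IsLocalRing R]
    (hprinc : (maximalIdeal R).IsPrincipal)
    (hsq : maximalIdeal R ^ 2 = ⊥) (A : Matrix (Fin 2) (Fin 2) R) :
    ∃ g : GL (Fin 2) R,
      (g : Matrix (Fin 2) (Fin 2) R) * A * (g⁻¹ : GL (Fin 2) R) = A.transpose :=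
  have := preValuationRing_of_maximalIdeal_sq_eq_bot hprinc hsq
  exists_GL_conj_eq_transpose_fin_two_of_preValuationRing A

/-- Over a local principal ideal ring `R` of length two, every `2 × 2`
matrix is similar to its transpose. -/
theorem stmt4 {R : Type*} [CommRing R] [IsLocalRing R]
    (hprinc : (maximalIdeal R).IsPrincipal) (hne : maximalIdeal R ≠ ⊥)
    (hsq : maximalIdeal R ^ 2 = ⊥) (A : Matrix (Fin 2) (Fin 2) R) :
    ∃ g : GL (Fin 2) R,
      (g : Matrix (Fin 2) (Fin 2) R) * A * (g⁻¹ : GL (Fin 2) R) = A.transpose :=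
  stmt4_general hprinc hsq A
end

section
/- Let R be a local principal ideal ring of length two and let n ≥ 3 be an integer. Then there exists a matrix A ∈ M_n(R) which is not similar to its transpose, i.e., there is no g ∈ GL_n(R) with g A g⁻¹ = Aᵀ. -/
/-!
Take `π ≠ 0` in the maximal ideal `𝔪` and `A = E₀₁ + π E₂₀`. Comparing entries of `G A = Aᵀ G`
shows that rows `0` and `2` of `G` vanish modulo `𝔪` away from column `1`: row `0` is `0` or a
multiple of `π` there, and row `2` is killed by `π ≠ 0`, so it cannot contain a unit. Every term
of the Leibniz expansion of `det G` then has a factor in `𝔪`, since a permutation cannot send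
both `0` and `2` to `1`; hence `G` is not invertible.
-/

open Matrix IsLocalRing

namespace Matrix

variable {ι R : Type*} [Fintype ι] [DecidableEq ι] [CommRing R]

theorem det_mem_of_rows_mem_off_column (I : Ideal R) {M : Matrix ι ι R} {i i' c : ι}
    (hii' : i ≠ i') (hi : ∀ j ≠ c, M i j ∈ I) (hi' : ∀ j ≠ c, M i' j ∈ I) : M.det ∈ I := by
  rw [← det_transpose, det_apply']
  refine Ideal.sum_mem _ fun σ _ => Ideal.mul_mem_left _ _ ?_
  have hσ : σ i ≠ c ∨ σ i' ≠ c := by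
    by_contra! h
    exact hii' (σ.injective (h.1.trans h.2.symm))
  rcases hσ with h | h
  · exact Ideal.mem_of_dvd _ (Finset.dvd_prod_of_mem _ (Finset.mem_univ i)) (hi _ h)
  · exact Ideal.mem_of_dvd _ (Finset.dvd_prod_of_mem _ (Finset.mem_univ i')) (hi' _ h)

section Intertwiner

variable {G : Matrix ι ι R} {a b c : ι} {π : R}
  (h : G * (single a b 1 + single c a π) = (single a b 1 + single c a π)ᵀ * G)
include h

theorem intertwiner_apply_mem_span (hab : a ≠ b) {j : ι} (hjb : j ≠ b) :
    G a j ∈ Ideal.span {π} := by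
  have hbj : (G * single c a π) b j = G a j := by
    simpa [transpose_single, mul_add, add_mul, hab.symm, hjb] using congrFun₂ h b j
  rw [← hbj]
  by_cases hja : j = a
  · subst hja
    simpa using Ideal.mul_mem_left _ _ (Ideal.mem_span_singleton_self π)
  · simp [hja]

theorem mul_intertwiner_apply_eq_zero (hab : a ≠ b) (hac : a ≠ c) (hbc : b ≠ c) {j : ι}
    (hjb : j ≠ b) : π * G c j = 0 := by
  by_cases hja : j = a
  · subst hja
    have hcj : G c j = 0 := by
      simpa [transpose_single, mul_add, add_mul, hab.symm, hbc.symm, hac.symm] using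
        congrFun₂ h c b
    rw [hcj, mul_zero]
  · simpa [transpose_single, mul_add, add_mul, hab, hja, hjb, eq_comm] using congrFun₂ h a j

end Intertwiner

end Matrix

namespace IsLocalRing

variable {R : Type*} [CommRing R] [IsLocalRing R]

theorem mem_maximalIdeal_of_mul_eq_zero {a x : R} (ha : a ≠ 0) (h : a * x = 0) :
    x ∈ maximalIdeal R := by
  by_contra hx
  exact ha ((notMem_maximalIdeal.mp hx).mul_left_eq_zero.mp h)

variable {ι : Type*} [Fintype ι] [DecidableEq ι]

theorem det_mem_maximalIdeal_of_mul_eq_transpose_mul {G : Matrix ι ι R} {a b c : ι} {π : R}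
    (hπ : π ∈ maximalIdeal R) (hπ0 : π ≠ 0) (hab : a ≠ b) (hac : a ≠ c) (hbc : b ≠ c)
    (h : G * (single a b 1 + single c a π) = (single a b 1 + single c a π)ᵀ * G) :
    G.det ∈ maximalIdeal R := by
  refine det_mem_of_rows_mem_off_column (c := b) _ hac (fun j hjb => ?_) (fun j hjb => ?_)
  · exact (Ideal.span_singleton_le_iff_mem _).mpr hπ (intertwiner_apply_mem_span h hab hjb)
  · exact mem_maximalIdeal_of_mul_eq_zero hπ0 (mul_intertwiner_apply_eq_zero h hab hac hbc hjb)

theorem not_exists_conj_eq_transpose {a b c : ι} {π : R} (hπ : π ∈ maximalIdeal R)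
    (hπ0 : π ≠ 0) (hab : a ≠ b) (hac : a ≠ c) (hbc : b ≠ c) :
    ¬ ∃ g : GL ι R, (g : Matrix ι ι R) * (single a b 1 + single c a π) *
      ((g⁻¹ : GL ι R) : Matrix ι ι R) =
      (single a b 1 + single c a π)ᵀ := by
  rintro ⟨g, hg⟩
  have hG : (g : Matrix ι ι R) * (single a b 1 + single c a π) =
      (single a b 1 + single c a π)ᵀ * (g : Matrix ι ι R) := by
    rw [← hg, mul_assoc _ _ (g : Matrix ι ι R), Units.inv_mul, mul_one]
  exact (mem_maximalIdeal _).mp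
    (det_mem_maximalIdeal_of_mul_eq_transpose_mul hπ hπ0 hab hac hbc hG)
    ((isUnit_iff_isUnit_det _).mp g.isUnit)

end IsLocalRing

theorem stmt5_general {R : Type*} [CommRing R] [IsLocalRing R]
    (hne : maximalIdeal R ≠ ⊥) (n : ℕ) (hn : 3 ≤ n) :
    ∃ A : Matrix (Fin n) (Fin n) R,
      ¬ ∃ g : GL (Fin n) R,
        (g : Matrix (Fin n) (Fin n) R) * A * (g⁻¹ : GL (Fin n) R) = A.transpose := by
  obtain ⟨π, hπ, hπ0⟩ := Submodule.exists_mem_ne_zero_of_ne_bot hne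
  let i : Fin 3 ↪ Fin n := Fin.castLEEmb hn
  exact ⟨_, not_exists_conj_eq_transpose hπ hπ0 (i.injective.ne (by decide : (0 : Fin 3) ≠ 1))
    (i.injective.ne (by decide : (0 : Fin 3) ≠ 2)) (i.injective.ne (by decide : (1 : Fin 3) ≠ 2))⟩

/-- Over a local principal ideal ring `R` of length two, for every
`n ≥ 3` there exists an `n × n` matrix which is not similar to its transpose. -/
theorem stmt5 {R : Type*} [CommRing R] [IsLocalRing R]
    (hprinc : (maximalIdeal R).IsPrincipal) (hne : maximalIdeal R ≠ ⊥)
    (hsq : maximalIdeal R ^ 2 = ⊥) (n : ℕ) (hn : 3 ≤ n) :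
    ∃ A : Matrix (Fin n) (Fin n) R,
      ¬ ∃ g : GL (Fin n) R,
        (g : Matrix (Fin n) (Fin n) R) * A * (g⁻¹ : GL (Fin n) R) = A.transpose :=
  stmt5_general hne n hn
end

section
/- Let R be a local principal ideal ring of length two with residue field k and reduction map r, let n be a positive integer, and let 𝔸 ∈ M_n(R) be such that A = r(𝔸) is regular, i.e., the minimal polynomial of A equals its characteristic polynomial. Then for every g ∈ GL_n(k) commuting with A there exists 𝐠 ∈ GL_n(R) commuting with 𝔸 such that r(𝐠) = g; that is, the reduction map from the centralizer of 𝔸 in GL_n(R) to the centralizer of A in GL_n(k) is surjective. -/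
open Matrix IsLocalRing

/-! A regular matrix over a field has a cyclic vector: by the structure theory of finitely
generated torsion modules over the PID `k[X]`, some vector `v` has annihilator generated by the
minimal polynomial, and since that polynomial has degree `n` the vectors `q(A) v` with
`deg q < n` form a basis of `kⁿ`. Hence everything commuting with `A` is a polynomial `p(A)`.
Lifting the coefficients of `p` to `R`, the matrix `p̃(𝔸)` commutes with `𝔸` and reduces to `g`,
and it is invertible because its determinant reduces to a unit of the local ring `R`. -/

open Polynomial Module

namespace Module.End

variable {K V : Type*} [Field K] [AddCommGroup V] [Module K V] [FiniteDimensional K V]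

theorem exists_aeval_apply_eq_zero_iff_minpoly_dvd (f : End K V) :
    ∃ x : V, ∀ p : K[X], aeval f p x = 0 ↔ minpoly K f ∣ p := by
  obtain ⟨x, hx⟩ := exists_ker_toSpanSingleton_eq_annihilator K[X] (AEval' f)
  obtain ⟨x, rfl⟩ := (AEval'.of f).surjective x
  refine ⟨x, fun p => ?_⟩
  rw [← Ideal.mem_span_singleton, span_minpoly_eq_annihilator, ← hx, LinearMap.mem_ker,
    LinearMap.toSpanSingleton_apply, ← AEval.of_aeval_smul, LinearEquiv.map_eq_zero_iff]
  rfl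

theorem exists_forall_exists_aeval_apply_eq (f : End K V)
    (hf : (minpoly K f).natDegree = finrank K V) :
    ∃ x : V, ∀ v : V, ∃ p : K[X], aeval f p x = v := by
  obtain ⟨x, hx⟩ := exists_aeval_apply_eq_zero_iff_minpoly_dvd f
  let evalAt : K[X]_(finrank K V) →ₗ[K] V :=
    (LinearMap.applyₗ x ∘ₗ (aeval f).toLinearMap) ∘ₗ (degreeLT K _).subtype
  have hinj : Function.Injective evalAt := by
    rw [← LinearMap.ker_eq_bot, LinearMap.ker_eq_bot']
    rintro ⟨p, hp⟩ hpx
    have hdeg : p.degree < (minpoly K f).degree := by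
      rwa [degree_eq_natDegree (minpoly.ne_zero (Algebra.IsIntegral.isIntegral f)), hf,
        ← mem_degreeLT]
    exact Subtype.ext (eq_zero_of_dvd_of_degree_lt ((hx p).1 hpx) hdeg)
  have hrank : finrank K (K[X]_(finrank K V)) = finrank K V := by
    simp [(degreeLTEquiv K _).finrank_eq]
  refine ⟨x, fun v => ?_⟩
  obtain ⟨⟨p, _⟩, hp⟩ := (LinearMap.injective_iff_surjective_of_finrank_eq_finrank hrank).1 hinj v
  exact ⟨p, hp⟩

theorem exists_eq_aeval_of_commute {f g : End K V}
    (hf : (minpoly K f).natDegree = finrank K V) (hg : Commute g f) :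
    ∃ p : K[X], g = aeval f p := by
  obtain ⟨x, hx⟩ := exists_forall_exists_aeval_apply_eq f hf
  obtain ⟨p, hp⟩ := hx (g x)
  refine ⟨p, LinearMap.ext fun v => ?_⟩
  obtain ⟨q, rfl⟩ := hx v
  have hgq : Commute g (aeval f q) :=
    Algebra.commute_of_mem_adjoin_singleton_of_commute (aeval_mem_adjoin_singleton K f) hg
  calc g (aeval f q x) = aeval f q (aeval f p x) := by rw [← mul_apply, hgq.eq, mul_apply, hp]
    _ = aeval f p (aeval f q x) := by
      rw [← mul_apply, ← map_mul, mul_comm, map_mul, mul_apply]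

end Module.End

namespace Matrix

variable {n : Type*} [Fintype n] [DecidableEq n]

theorem exists_eq_aeval_of_commute {K : Type*} [Field K] {A B : Matrix n n K}
    (hA : minpoly K A = A.charpoly) (hB : Commute B A) : ∃ p : K[X], B = aeval A p := by
  have hdeg : (minpoly K (toLinAlgEquiv' A)).natDegree = finrank K (n → K) := by
    rw [minpoly.algEquiv_eq, hA, charpoly_natDegree_eq_dim, finrank_fintype_fun_eq_card]
  obtain ⟨p, hp⟩ := End.exists_eq_aeval_of_commute hdeg (hB.map toLinAlgEquiv')
  exact ⟨p, toLinAlgEquiv'.injective (by rw [hp, aeval_algHom_apply])⟩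

theorem exists_map_aeval_eq {R S : Type*} [CommRing R] [CommRing S] {f : R →+* S}
    (hf : Function.Surjective f) (M : Matrix n n R) (p : S[X]) :
    ∃ P : R[X], (aeval M P).map f = aeval (M.map f) p := by
  obtain ⟨P, rfl⟩ := map_surjective f hf p
  refine ⟨P, map_aeval_eq_aeval_map (ψ := f.mapMatrix) ?_ P M⟩
  ext a i j
  simp [algebraMap_matrix_apply, apply_ite f]

theorem isUnit_of_isUnit_map {R S : Type*} [CommRing R] [CommRing S] (f : R →+* S)
    [IsLocalHom f] {M : Matrix n n R} (h : IsUnit (M.map f)) : IsUnit M := by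
  rw [isUnit_iff_isUnit_det, ← isUnit_map_iff f, RingHom.map_det]
  exact (isUnit_iff_isUnit_det _).1 h

end Matrix

theorem stmt7_general {R : Type*} [CommRing R] [IsLocalRing R]
    (n : ℕ)
    (𝔸 : Matrix (Fin n) (Fin n) R)
    (A : Matrix (Fin n) (Fin n) (ResidueField R)) (hA : A = 𝔸.map (residue R))
    (hreg : minpoly (ResidueField R) A = A.charpoly) :
    ∀ g : GL (Fin n) (ResidueField R),
      (g : Matrix (Fin n) (Fin n) (ResidueField R)) * A =
        A * (g : Matrix (Fin n) (Fin n) (ResidueField R)) →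
      ∃ gg : GL (Fin n) R,
        (gg : Matrix (Fin n) (Fin n) R) * 𝔸 = 𝔸 * (gg : Matrix (Fin n) (Fin n) R) ∧
        (gg : Matrix (Fin n) (Fin n) R).map (residue R) =
          (g : Matrix (Fin n) (Fin n) (ResidueField R)) := by
  intro g hg
  obtain ⟨p, hp⟩ := exists_eq_aeval_of_commute hreg hg
  obtain ⟨P, hP⟩ := exists_map_aeval_eq (residue_surjective (R := R)) 𝔸 p
  have hlift : (aeval 𝔸 P).map (residue R) = g := by rw [hP, ← hA, ← hp]
  obtain ⟨gg, hgg⟩ := isUnit_of_isUnit_map (residue R) (hlift ▸ g.isUnit)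
  refine ⟨gg, ?_, hgg ▸ hlift⟩
  simpa [hgg] using ((commute_X P).map (aeval 𝔸)).symm.eq

/-- Theorem: centralizers lift in the regular case.  Let `R` be a local
principal ideal ring of length two with residue field `k` and reduction map `r`, and let
`𝔸 ∈ Mₙ(R)` be such that `A = r(𝔸)` is regular (its minimal polynomial equals its
characteristic polynomial).  Then every `g ∈ GLₙ(k)` commuting with `A` lifts to some
`gg ∈ GLₙ(R)` commuting with `𝔸`. -/
theorem stmt7 {R : Type*} [CommRing R] [IsLocalRing R]
    (hprinc : (maximalIdeal R).IsPrincipal) (hne : maximalIdeal R ≠ ⊥)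
    (hsq : maximalIdeal R ^ 2 = ⊥) (n : ℕ) (hn : 0 < n)
    (𝔸 : Matrix (Fin n) (Fin n) R)
    (A : Matrix (Fin n) (Fin n) (ResidueField R)) (hA : A = 𝔸.map (residue R))
    (hreg : minpoly (ResidueField R) A = A.charpoly) :
    ∀ g : GL (Fin n) (ResidueField R),
      (g : Matrix (Fin n) (Fin n) (ResidueField R)) * A =
        A * (g : Matrix (Fin n) (Fin n) (ResidueField R)) →
      ∃ gg : GL (Fin n) R,
        (gg : Matrix (Fin n) (Fin n) R) * 𝔸 = 𝔸 * (gg : Matrix (Fin n) (Fin n) R) ∧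
        (gg : Matrix (Fin n) (Fin n) R).map (residue R) =
          (g : Matrix (Fin n) (Fin n) (ResidueField R)) :=
  stmt7_general n 𝔸 A hA hreg
end

section
/- Let R be a local principal ideal ring of length two with maximal ideal 𝔪 generated by π, residue field k, and reduction map r. Then for any positive integer n and any X, X' ∈ M_n(R), the matrices πX and πX' are similar in M_n(R) if and only if r(X) and r(X') are similar in M_n(k). -/
/-!
Since `𝔪² = 0` and `π ≠ 0`, the annihilator of `π` is exactly `𝔪`, so `π • A = π • B` holds
precisely when `A` and `B` agree modulo `𝔪`. Multiplication by `π` commutes with conjugation,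
and every element of `GL_n(k)` lifts to `GL_n(R)` because `R` is local.
-/

open Matrix IsLocalRing

instance RingHom.isLocalHom_mapMatrix {n R S : Type*} [Fintype n] [DecidableEq n]
    [CommRing R] [CommRing S] (f : R →+* S) [IsLocalHom f] :
    IsLocalHom (f.mapMatrix : Matrix n n R →+* Matrix n n S) where
  map_nonunit M hM := by
    rw [isUnit_iff_isUnit_det] at hM ⊢
    exact IsUnit.of_map f _ (by rwa [RingHom.map_det, RingHom.mapMatrix_apply])

theorem Matrix.GeneralLinearGroup.map_surjective_s9 {n R S : Type*} [Fintype n] [DecidableEq n]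
    [CommRing R] [CommRing S] (f : R →+* S) [IsLocalHom f] (hf : Function.Surjective f) :
    Function.Surjective (GeneralLinearGroup.map (n := n) f) :=
  IsLocalRing.surjective_units_map_of_local_ringHom _
    (fun N => ⟨N.map (Function.surjInv hf), by ext; simp [Function.surjInv_eq]⟩) inferInstance

theorem Matrix.GeneralLinearGroup.map_conj {n R S : Type*} [Fintype n] [DecidableEq n]
    [CommRing R] [CommRing S] (f : R →+* S) (g : GL n R) (X : Matrix n n R) :
    ((g : Matrix n n R) * X * (g⁻¹ : GL n R)).map f
      = (map f g : Matrix n n S) * X.map f * ((map f g)⁻¹ : GL n S) := by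
  rw [← GeneralLinearGroup.map_inv, Matrix.map_mul, Matrix.map_mul]
  rfl

namespace IsLocalRing

variable {R : Type*} [CommRing R] [IsLocalRing R] {π : R}

theorem mul_eq_zero_iff_residue_eq_zero (hπ : π ∈ maximalIdeal R) (hπ0 : π ≠ 0)
    (hsq : maximalIdeal R ^ 2 = ⊥) (a : R) : π * a = 0 ↔ residue R a = 0 := by
  rw [residue_eq_zero_iff]
  refine ⟨fun h => ?_, fun ha => ?_⟩
  · by_contra ha
    exact hπ0 ((notMem_maximalIdeal.mp ha).mul_left_eq_zero.mp h)
  · simpa [← pow_two, hsq] using Ideal.mul_mem_mul hπ ha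

theorem mul_eq_mul_iff_residue_eq (hπ : π ∈ maximalIdeal R) (hπ0 : π ≠ 0)
    (hsq : maximalIdeal R ^ 2 = ⊥) (a b : R) : π * a = π * b ↔ residue R a = residue R b := by
  rw [← sub_eq_zero, ← mul_sub, mul_eq_zero_iff_residue_eq_zero hπ hπ0 hsq, map_sub, sub_eq_zero]

theorem smul_matrix_eq_iff_map_residue_eq {m n : Type*} (hπ : π ∈ maximalIdeal R) (hπ0 : π ≠ 0)
    (hsq : maximalIdeal R ^ 2 = ⊥) (M N : Matrix m n R) :
    π • M = π • N ↔ M.map (residue R) = N.map (residue R) := by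
  simp only [← Matrix.ext_iff, Matrix.smul_apply, smul_eq_mul, map_apply,
    mul_eq_mul_iff_residue_eq hπ hπ0 hsq]

end IsLocalRing

theorem stmt9_general {R : Type*} [CommRing R] [IsLocalRing R] (π : R)
    (hπ : maximalIdeal R = Ideal.span {π}) (hne : maximalIdeal R ≠ ⊥)
    (hsq : maximalIdeal R ^ 2 = ⊥) (n : ℕ)
    (X X' : Matrix (Fin n) (Fin n) R) :
    (∃ g : GL (Fin n) R,
        (g : Matrix (Fin n) (Fin n) R) * (π • X) * (g⁻¹ : GL (Fin n) R) = π • X') ↔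
      ∃ h : GL (Fin n) (ResidueField R),
        (h : Matrix (Fin n) (Fin n) (ResidueField R)) * X.map (residue R) *
            (h⁻¹ : GL (Fin n) (ResidueField R)) = X'.map (residue R) := by
  have hπm : π ∈ maximalIdeal R := hπ ▸ Ideal.mem_span_singleton_self π
  have hπ0 : π ≠ 0 := fun h => hne (by rw [hπ, h, Ideal.span_singleton_eq_bot])
  have hconj (g : GL (Fin n) R) :
      (g : Matrix (Fin n) (Fin n) R) * (π • X) * (g⁻¹ : GL (Fin n) R)
        = π • ((g : Matrix (Fin n) (Fin n) R) * X * (g⁻¹ : GL (Fin n) R)) := by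
    rw [Matrix.mul_smul, Matrix.smul_mul]
  simp_rw [hconj, smul_matrix_eq_iff_map_residue_eq hπm hπ0 hsq, GeneralLinearGroup.map_conj]
  rw [(GeneralLinearGroup.map_surjective_s9 (residue R) residue_surjective).exists]

/-- Let `R` be a local principal ideal ring of length two with maximal
ideal generated by `π`, residue field `k`, and reduction map `r`.  For `X, X' ∈ Mₙ(R)`,
the matrices `πX` and `πX'` are similar in `Mₙ(R)` if and only if `r(X)` and `r(X')` are
similar in `Mₙ(k)`. -/
theorem stmt9 {R : Type*} [CommRing R] [IsLocalRing R] (π : R)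
    (hπ : maximalIdeal R = Ideal.span {π}) (hne : maximalIdeal R ≠ ⊥)
    (hsq : maximalIdeal R ^ 2 = ⊥) (n : ℕ) (hn : 0 < n)
    (X X' : Matrix (Fin n) (Fin n) R) :
    (∃ g : GL (Fin n) R,
        (g : Matrix (Fin n) (Fin n) R) * (π • X) * (g⁻¹ : GL (Fin n) R) = π • X') ↔
      ∃ h : GL (Fin n) (ResidueField R),
        (h : Matrix (Fin n) (Fin n) (ResidueField R)) * X.map (residue R) *
            (h⁻¹ : GL (Fin n) (ResidueField R)) = X'.map (residue R) :=
  stmt9_general π hπ hne hsq n X X'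
end

section
/- Let R be a finite local principal ideal ring of length two whose residue field has cardinality q. Then the number of similarity classes in M_2(R), i.e., the number of orbits for the conjugation action of GL_2(R) on M_2(R), equals q⁴ + q³ + q². -/
/-!
Over a local ring, a `2 × 2` matrix that is not scalar modulo `𝔪` has one of `e₁`, `e₂`, `e₁ + e₂`
as a cyclic vector, so it is conjugate to the companion matrix of its characteristic polynomial;
these classes are parametrised by `(trace, det) ∈ R²`, which gives `q⁴` classes.
When `𝔪 = (π)` and `𝔪² = 0`, a matrix that is scalar modulo `𝔪` is `c + π X` with `c` a fixed lift
of a residue and `X` determined modulo `𝔪`; since `π 𝔪 = 0`, conjugating by `g` conjugates `X`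
by the reduction of `g`, and `GL₂(R) → GL₂(k)` is onto. These classes therefore correspond to
`k × (M₂(k) / conjugation)`, and the same dichotomy over the field `k` counts `q² + q` classes.
In total there are `q⁴ + q (q² + q)` classes.
-/

open Function Set Matrix IsLocalRing

theorem Nat.card_eq_add_of_range_eq_compl {α β γ : Type*} [Finite γ] {f : α → γ}
    {g : β → γ} (hf : Injective f) (hg : Injective g) (h : range g = (range f)ᶜ) :
    Nat.card γ = Nat.card α + Nat.card β := by
  rw [← Nat.card_range_of_injective hf, ← Nat.card_range_of_injective hg, h,
    Nat.card_coe_set_eq, Nat.card_coe_set_eq, Set.ncard_add_ncard_compl]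

theorem IsConj.eq_of_forall_commute {M : Type*} [Monoid M] {a b : M} (ha : ∀ x, Commute a x)
    (h : IsConj a b) : a = b := by
  obtain ⟨u, hu⟩ := h
  exact (Units.mul_left_inj u).mp ((ha u).eq.trans hu.eq)

theorem ConjClasses.mk_out {M : Type*} [Monoid M] (x : ConjClasses M) :
    ConjClasses.mk (Quotient.out x) = x :=
  Quotient.out_eq x

theorem Matrix.exists_units_map_eq {n R S : Type*} [Fintype n] [DecidableEq n] [CommRing R]
    [CommRing S] {f : R →+* S} [IsLocalHom f] (hf : Surjective f) (v : (Matrix n n S)ˣ) :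
    ∃ u : (Matrix n n R)ˣ, (u : Matrix n n R).map f = v := by
  set M := (v : Matrix n n S).map (surjInv hf)
  have hM : M.map f = v := by ext; simp [M, surjInv_eq hf]
  have hdet : IsUnit (f M.det) := by
    rw [RingHom.map_det, RingHom.mapMatrix_apply, hM]
    exact (isUnit_iff_isUnit_det _).mp v.isUnit
  exact ⟨((isUnit_iff_isUnit_det M).mpr ((isUnit_map_iff f _).mp hdet)).unit, hM⟩

theorem IsConj.trace_eq {n R : Type*} [Fintype n] [DecidableEq n] [CommRing R]
    {A B : Matrix n n R} (h : IsConj A B) : A.trace = B.trace := by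
  obtain ⟨u, hu⟩ := h
  rw [← trace_conj u.isUnit A, ← Matrix.coe_units_inv, hu.eq, mul_assoc, Units.mul_inv, mul_one]

theorem IsConj.det_eq {n R : Type*} [Fintype n] [DecidableEq n] [CommRing R]
    {A B : Matrix n n R} (h : IsConj A B) : A.det = B.det := by
  obtain ⟨u, hu⟩ := h
  rw [← det_conj u.isUnit A, ← Matrix.coe_units_inv, hu.eq, mul_assoc, Units.mul_inv, mul_one]

namespace IsLocalRing

section LengthTwo

variable {R : Type*} [CommRing R] [IsLocalRing R] {π : R}
  (hπ : maximalIdeal R = Ideal.span {π}) (hne : maximalIdeal R ≠ ⊥)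
  (hsq : maximalIdeal R ^ 2 = ⊥)

include hπ hne hsq in
theorem mul_eq_zero_iff_mem_maximalIdeal {x : R} : π * x = 0 ↔ x ∈ maximalIdeal R := by
  refine ⟨fun h => by_contra fun hx => hne ?_, fun hx => ?_⟩
  · rw [hπ, Ideal.span_singleton_eq_bot, ← (notMem_maximalIdeal.mp hx).mul_left_eq_zero, h]
  · have hπx : π * x ∈ maximalIdeal R ^ 2 :=
      sq (maximalIdeal R) ▸ Ideal.mul_mem_mul (hπ ▸ Ideal.mem_span_singleton_self π) hx
    rwa [hsq, Ideal.mem_bot] at hπx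

include hπ hne hsq in
theorem mul_eq_mul_iff_residue_eq_s12 {x y : R} : π * x = π * y ↔ residue R x = residue R y := by
  rw [← sub_eq_zero, ← mul_sub, mul_eq_zero_iff_mem_maximalIdeal hπ hne hsq,
    ← residue_eq_zero_iff, map_sub, sub_eq_zero]

noncomputable def residueLift (c : ResidueField R) : R :=
  surjInv residue_surjective c

@[simp]
theorem residue_residueLift (c : ResidueField R) : residue R (residueLift c) = c :=
  surjInv_eq residue_surjective c

include hπ hne hsq in
theorem card_eq_card_residueField_sq [Finite R] :
    Nat.card R = Nat.card (ResidueField R) ^ 2 := by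
  have hm : Nat.card (maximalIdeal R) = Nat.card (ResidueField R) := by
    refine (Nat.card_eq_of_bijective (fun c => ⟨π * residueLift c,
      Ideal.mul_mem_right _ _ (hπ ▸ Ideal.mem_span_singleton_self π)⟩) ⟨?_, ?_⟩).symm
    · intro c c' h
      simpa using (mul_eq_mul_iff_residue_eq_s12 hπ hne hsq).mp (Subtype.ext_iff.mp h)
    · rintro ⟨x, hx⟩
      obtain ⟨b, rfl⟩ := Ideal.mem_span_singleton'.mp (hπ ▸ hx)
      refine ⟨residue R b, Subtype.ext ?_⟩
      change π * residueLift (residue R b) = b * π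
      rw [mul_comm b, mul_eq_mul_iff_residue_eq_s12 hπ hne hsq, residue_residueLift]
  rw [AddSubgroup.card_eq_card_quotient_mul_card_addSubgroup (maximalIdeal R).toAddSubgroup, sq]
  exact congrArg _ hm

end LengthTwo

end IsLocalRing

namespace Matrix.FinTwo

section CommRing

variable {R : Type*} [CommRing R]

def companion (t d : R) : Matrix (Fin 2) (Fin 2) R := !![0, -d; 1, t]

@[simp]
theorem trace_companion (t d : R) : (companion t d).trace = t := by
  simp [companion, trace_fin_two]

@[simp]
theorem det_companion (t d : R) : (companion t d).det = d := by
  simp [companion, det_fin_two]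

theorem isConj_companion_of_isUnit_det {A : Matrix (Fin 2) (Fin 2) R} (v : Fin 2 → R)
    (hv : IsUnit (of ![v, A *ᵥ v]).det) : IsConj A (companion A.trace A.det) := by
  set P := (of ![v, A *ᵥ v])ᵀ
  have hP : IsUnit P := (isUnit_iff_isUnit_det P).mpr (by rwa [det_transpose])
  -- Cayley–Hamilton: `A (A v) = tr A • A v - det A • v`.
  have hAP : A * P = P * companion A.trace A.det := by
    ext i j
    fin_cases i <;> fin_cases j <;>
      simp only [P, companion, Fin.zero_eta, Fin.mk_one, Fin.isValue, mul_apply, transpose_apply,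
        of_apply, mulVec_fin_two, cons_val', cons_val_fin_one, cons_val_zero, cons_val_one,
        Fin.sum_univ_two, trace_fin_two, det_fin_two, mul_zero, mul_one, zero_add] <;> ring
  exact IsConj.symm ⟨hP.unit, hAP.symm⟩

theorem map_companion {S : Type*} [CommRing S] (f : R →+* S) (t d : R) :
    (companion t d).map f = companion (f t) (f d) := by
  ext i j
  fin_cases i <;> fin_cases j <;> simp [companion]

theorem isConj_scalar_iff {n : Type*} [Fintype n] [DecidableEq n] {c : R}
    {A : Matrix n n R} : IsConj (scalar n c) A ↔ scalar n c = A :=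
  ⟨fun h => h.eq_of_forall_commute (scalar_commute c fun _ => Commute.all _ _),
    fun h => h ▸ IsConj.refl _⟩

theorem not_isConj_scalar_companion [Nontrivial R] (c t d : R) :
    ¬IsConj (scalar (Fin 2) c) (companion t d) := fun h => by
  simpa [companion] using congrFun (congrFun (isConj_scalar_iff.mp h) 1) 0

theorem injective_mk_companion :
    Injective fun p : R × R => ConjClasses.mk (companion p.1 p.2) := by
  rintro ⟨t, d⟩ ⟨t', d'⟩ h
  have h' := ConjClasses.mk_eq_mk_iff_isConj.mp h
  simpa using And.intro h'.trace_eq h'.det_eq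

theorem card_conjClasses_eq_add [Finite R] {N : Type*} [Finite N]
    (F : N → ConjClasses (Matrix (Fin 2) (Fin 2) R)) (hF : Injective F)
    (hrange : ∀ A, ConjClasses.mk A ∈ range F ↔ ∀ t d, ¬IsConj A (companion t d)) :
    Nat.card (ConjClasses (Matrix (Fin 2) (Fin 2) R)) = Nat.card R ^ 2 + Nat.card N := by
  rw [Nat.card_eq_add_of_range_eq_compl injective_mk_companion hF, Nat.card_prod, sq]
  ext x
  obtain ⟨A, rfl⟩ := ConjClasses.mk_surjective x
  simp [hrange, ConjClasses.mk_eq_mk_iff_isConj, isConj_comm]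

end CommRing

section IsLocalRing

variable {R : Type*} [CommRing R] [IsLocalRing R]

theorem map_residue_eq_scalar_of_forall_not_isConj {A : Matrix (Fin 2) (Fin 2) R}
    (h : ∀ t d, ¬IsConj A (companion t d)) :
    A.map (residue R) = scalar (Fin 2) (residue R (A 0 0)) := by
  have hv (v : Fin 2 → R) : residue R (of ![v, A *ᵥ v]).det = 0 := by
    rw [residue_eq_zero_iff, mem_maximalIdeal, mem_nonunits_iff]
    exact fun hu => h _ _ (isConj_companion_of_isUnit_det v hu)
  have h₁ := hv ![1, 0]
  have h₂ := hv ![0, 1]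
  have h₃ := hv ![1, 1]
  simp only [det_fin_two, of_apply, mulVec_fin_two, cons_val', cons_val_zero, cons_val_one,
    cons_val_fin_one, mul_one, mul_zero, one_mul, zero_mul, add_zero, zero_add, sub_zero,
    zero_sub, map_neg, neg_eq_zero, map_sub, map_add] at h₁ h₂ h₃
  ext i j
  fin_cases i <;> fin_cases j <;> simp [h₁, h₂]
  linear_combination h₃ - h₁ + h₂

theorem not_isConj_companion_of_map_residue_eq_scalar {A : Matrix (Fin 2) (Fin 2) R}
    {c : ResidueField R} (h : A.map (residue R) = scalar (Fin 2) c) (t d : R) :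
    ¬IsConj A (companion t d) := fun hA => by
  have hk := (residue R).mapMatrix.toMonoidHom.map_isConj hA
  simp only [RingHom.toMonoidHom_eq_coe, MonoidHom.coe_coe, RingHom.mapMatrix_apply, h,
    map_companion] at hk
  exact not_isConj_scalar_companion _ _ _ hk

end IsLocalRing

theorem card_conjClasses_of_field {k : Type*} [Field k] [Finite k] :
    Nat.card (ConjClasses (Matrix (Fin 2) (Fin 2) k)) = Nat.card k ^ 2 + Nat.card k := by
  refine card_conjClasses_eq_add (fun c => ConjClasses.mk (scalar (Fin 2) c)) ?_ fun A => ?_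
  · intro c c' h
    exact scalar_inj.mp (isConj_scalar_iff.mp (ConjClasses.mk_eq_mk_iff_isConj.mp h))
  simp only [mem_range, ConjClasses.mk_eq_mk_iff_isConj, isConj_scalar_iff]
  refine ⟨fun ⟨c, hc⟩ t d hA => not_isConj_scalar_companion c t d (hc ▸ hA), fun h => ?_⟩
  have hA : scalar (Fin 2) (A 0 0) = A := map_injective (residue k).injective <| by
    change (scalar (Fin 2) (A 0 0)).map (residue k) = A.map (residue k)
    rw [map_residue_eq_scalar_of_forall_not_isConj h]
    simp [scalar_apply]
  exact ⟨A 0 0, hA⟩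

section LengthTwo

variable {R : Type*} [CommRing R] [IsLocalRing R] {π : R}
  (hπ : maximalIdeal R = Ideal.span {π}) (hne : maximalIdeal R ≠ ⊥)
  (hsq : maximalIdeal R ^ 2 = ⊥)

include hπ hne hsq in
theorem smul_eq_smul_iff_map_residue_eq {m n : Type*} {M N : Matrix m n R} :
    π • M = π • N ↔ M.map (residue R) = N.map (residue R) := by
  simp only [← Matrix.ext_iff, smul_apply, smul_eq_mul, map_apply,
    mul_eq_mul_iff_residue_eq_s12 hπ hne hsq]

@[simp]
theorem map_residue_map_residueLift {m n : Type*} (X : Matrix m n (ResidueField R)) :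
    (X.map residueLift).map (residue R) = X := by
  ext; simp

-- Lifting the scalar part by the fixed section `residueLift` is what makes the decomposition
-- `A = c + π X` of a matrix that is scalar modulo `𝔪` unique.
variable (π) in
noncomputable def ofResidue (c : ResidueField R) (X : Matrix (Fin 2) (Fin 2) (ResidueField R)) :
    Matrix (Fin 2) (Fin 2) R :=
  scalar (Fin 2) (residueLift c) + π • X.map residueLift

include hπ in
theorem map_residue_ofResidue (c : ResidueField R) (X : Matrix (Fin 2) (Fin 2) (ResidueField R)) :
    (ofResidue π c X).map (residue R) = scalar (Fin 2) c := by
  have : residue R π = 0 := (residue_eq_zero_iff π).mpr (hπ ▸ Ideal.mem_span_singleton_self π)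
  ext i j
  fin_cases i <;> fin_cases j <;> simp [ofResidue, this]

include hπ hne hsq in
theorem isConj_ofResidue_iff {c c' : ResidueField R}
    {X X' : Matrix (Fin 2) (Fin 2) (ResidueField R)} :
    IsConj (ofResidue π c X) (ofResidue π c' X') ↔ c = c' ∧ IsConj X X' := by
  have key (u : (Matrix (Fin 2) (Fin 2) R)ˣ) :
      SemiconjBy (u : Matrix (Fin 2) (Fin 2) R) (ofResidue π c X) (ofResidue π c X') ↔
        SemiconjBy ((u : Matrix (Fin 2) (Fin 2) R).map (residue R)) X X' := by
    have hs : Commute (scalar (Fin 2) (residueLift c)) (u : Matrix (Fin 2) (Fin 2) R) :=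
      scalar_commute _ (fun _ => Commute.all _ _) _
    rw [SemiconjBy, SemiconjBy, ofResidue, ofResidue, mul_add, add_mul, hs.eq, add_right_inj,
      mul_smul_comm, smul_mul_assoc, smul_eq_smul_iff_map_residue_eq hπ hne hsq, Matrix.map_mul,
      Matrix.map_mul, map_residue_map_residueLift, map_residue_map_residueLift]
  constructor
  · intro h
    have hc := (residue R).mapMatrix.toMonoidHom.map_isConj h
    simp only [RingHom.toMonoidHom_eq_coe, MonoidHom.coe_coe, RingHom.mapMatrix_apply,
      map_residue_ofResidue hπ, isConj_scalar_iff, scalar_inj] at hc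
    subst hc
    obtain ⟨u, hu⟩ := h
    exact ⟨rfl, Units.map ((residue R).mapMatrix (m := Fin 2)).toMonoidHom u, (key u).mp hu⟩
  · rintro ⟨rfl, v, hv⟩
    obtain ⟨u, hu⟩ := exists_units_map_eq residue_surjective v
    exact ⟨u, (key u).mpr (hu ▸ hv)⟩

include hπ hne hsq in
theorem exists_ofResidue_eq {A : Matrix (Fin 2) (Fin 2) R} {c : ResidueField R}
    (h : A.map (residue R) = scalar (Fin 2) c) : ∃ X, ofResidue π c X = A := by
  have hmem (i j : Fin 2) : ∃ b, b * π = (A - scalar (Fin 2) (residueLift c)) i j := by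
    rw [← Ideal.mem_span_singleton', ← hπ, ← residue_eq_zero_iff]
    have := congrFun (congrFun h i) j
    fin_cases i <;> fin_cases j <;> simp_all
  choose b hb using hmem
  refine ⟨(of b).map (residue R), ?_⟩
  have hπb : π • ((of b).map (residue R)).map residueLift = π • of b :=
    (smul_eq_smul_iff_map_residue_eq hπ hne hsq).mpr (map_residue_map_residueLift _)
  rw [ofResidue, hπb, ← eq_sub_iff_add_eq']
  ext i j
  simpa [mul_comm] using hb i j

variable (π) in
noncomputable def ofResidueClass
    (p : ResidueField R × ConjClasses (Matrix (Fin 2) (Fin 2) (ResidueField R))) :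
    ConjClasses (Matrix (Fin 2) (Fin 2) R) :=
  ConjClasses.mk (ofResidue π p.1 (Quotient.out p.2))

include hπ hne hsq in
theorem injective_ofResidueClass : Injective (ofResidueClass π) := by
  rintro ⟨c, x⟩ ⟨c', x'⟩ h
  obtain ⟨rfl, hx⟩ :=
    (isConj_ofResidue_iff hπ hne hsq).mp (ConjClasses.mk_eq_mk_iff_isConj.mp h)
  rw [← ConjClasses.mk_out x, ← ConjClasses.mk_out x', ConjClasses.mk_eq_mk_iff_isConj.mpr hx]

include hπ hne hsq in
theorem mk_mem_range_ofResidueClass_iff (A : Matrix (Fin 2) (Fin 2) R) :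
    ConjClasses.mk A ∈ range (ofResidueClass π) ↔ ∀ t d, ¬IsConj A (companion t d) := by
  constructor
  · rintro ⟨⟨c, x⟩, hx⟩ t d hA
    exact not_isConj_companion_of_map_residue_eq_scalar (map_residue_ofResidue hπ c _) t d
      ((ConjClasses.mk_eq_mk_iff_isConj.mp hx).trans hA)
  · intro h
    obtain ⟨X, hX⟩ :=
      exists_ofResidue_eq hπ hne hsq (map_residue_eq_scalar_of_forall_not_isConj h)
    refine ⟨(residue R (A 0 0), ConjClasses.mk X), ConjClasses.mk_eq_mk_iff_isConj.mpr ?_⟩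
    refine ((isConj_ofResidue_iff hπ hne hsq).mpr ⟨rfl, ?_⟩).trans (by rw [hX])
    exact ConjClasses.mk_eq_mk_iff_isConj.mp (ConjClasses.mk_out _)

include hπ hne hsq in
theorem card_conjClasses_of_sq_eq_bot [Finite R] :
    Nat.card (ConjClasses (Matrix (Fin 2) (Fin 2) R)) =
      Nat.card (ResidueField R) ^ 4 + Nat.card (ResidueField R) ^ 3 +
        Nat.card (ResidueField R) ^ 2 := by
  have : Finite (ResidueField R) := .of_surjective _ residue_surjective
  rw [card_conjClasses_eq_add _ (injective_ofResidueClass hπ hne hsq)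
      (mk_mem_range_ofResidueClass_iff hπ hne hsq),
    Nat.card_prod, card_conjClasses_of_field, card_eq_card_residueField_sq hπ hne hsq]
  ring

end LengthTwo

end Matrix.FinTwo

/-- For a finite local principal ideal ring `R` of length two with
residue field of cardinality `q`, the number of similarity classes in `M₂(R)` equals
`q⁴ + q³ + q²`. -/
theorem stmt12 {R : Type*} [CommRing R] [IsLocalRing R] [Finite R]
    (hprinc : (maximalIdeal R).IsPrincipal) (hne : maximalIdeal R ≠ ⊥)
    (hsq : maximalIdeal R ^ 2 = ⊥) (q : ℕ) (hq : Nat.card (ResidueField R) = q) :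
    Nat.card (Quot fun A B : Matrix (Fin 2) (Fin 2) R =>
        ∃ g : GL (Fin 2) R,
          (g : Matrix (Fin 2) (Fin 2) R) * A * (g⁻¹ : GL (Fin 2) R) = B) =
      q ^ 4 + q ^ 3 + q ^ 2 := by
  obtain ⟨π, hπ⟩ := hprinc
  have hconj : (fun A B : Matrix (Fin 2) (Fin 2) R =>
      ∃ g : GL (Fin 2) R, (g : Matrix (Fin 2) (Fin 2) R) * A * (g⁻¹ : GL (Fin 2) R) = B) =
        IsConj := by
    ext A B
    simp only [Units.mul_inv_eq_iff_eq_mul]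
    rfl
  rw [hconj, ← hq]
  exact Matrix.FinTwo.card_conjClasses_of_sq_eq_bot (by simpa using hπ) hne hsq
end
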